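/- Let u : 𝕋 → ℝ be continuous on 𝕋 ∖ {1} with one-sided limits u⁺(1) := lim_{t→0⁺} u(e^{it}) and u⁻(1) := lim_{t→0⁻} u(e^{it}), and suppose 0 < u⁻(1) < u⁺(1). Then lim_{r→1⁻} (1/2π) ∫_𝕋 Re((e^{it}+r)/(e^{it}−r)) u(e^{it}) dt exists and lies in the interval [u⁻(1), u⁺(1)]. -/

import Mathlib

/-!
On the circle the kernel is the Poisson kernel `P_r(t) = (1 - r²) / (1 - 2 r cos t + r²)`.
It is nonnegative, has mass `π` on each of the half circles `(0, π]` and `(π, 2π)`, and for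
`r → 1⁻` it tends to `0` uniformly wherever `cos t` stays away from `1`. On each half circle
it is therefore a family of peak functions concentrating at the endpoint `t = 0`, resp.
`t = 2π`, where `u` has the limit `u⁺(1)`, resp. `u⁻(1)`. Hence the Poisson integral tends to
the average `(u⁺(1) + u⁻(1)) / 2`, which lies in `[u⁻(1), u⁺(1)]`.
-/

open Set Filter Real MeasureTheory Topology
open scoped ENNReal

noncomputable def diskPoissonKernel (r t : ℝ) : ℝ :=
  (1 - r ^ 2) / (1 - 2 * r * cos t + r ^ 2)

lemma eventually_abs_lt_one_nhdsLT_one : ∀ᶠ r in 𝓝[<] (1 : ℝ), |r| < 1 := by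
  filter_upwards [Ioo_mem_nhdsLT (by norm_num : (-1 : ℝ) < 1)] with r hr
  exact abs_lt.2 hr

section Kernel

variable {r : ℝ}

lemma mul_cos_le_abs (r t : ℝ) : r * cos t ≤ |r| :=
  (le_abs_self _).trans <| by
    rw [abs_mul]; exact mul_le_of_le_one_right (abs_nonneg r) (abs_cos_le_one t)

lemma one_sub_mul_cos_pos (hr : |r| < 1) (t : ℝ) : 0 < 1 - r * cos t := by
  linarith [mul_cos_le_abs r t]

lemma one_sub_two_mul_cos_add_sq_pos (hr : |r| < 1) (t : ℝ) :
    0 < 1 - 2 * r * cos t + r ^ 2 := by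
  nlinarith [mul_cos_le_abs r t, sq_abs r, abs_nonneg r]

lemma diskPoissonKernel_nonneg (hr : |r| < 1) (t : ℝ) : 0 ≤ diskPoissonKernel r t :=
  div_nonneg (by nlinarith [sq_abs r, abs_nonneg r])
    (one_sub_two_mul_cos_add_sq_pos hr t).le

lemma continuous_diskPoissonKernel (hr : |r| < 1) : Continuous (diskPoissonKernel r) :=
  continuous_const.div (by fun_prop) fun t => (one_sub_two_mul_cos_add_sq_pos hr t).ne'

lemma re_exp_add_div_exp_sub (r t : ℝ) :
    ((Complex.exp (t * Complex.I) + r) / (Complex.exp (t * Complex.I) - r)).re =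
      diskPoissonKernel r t := by
  rw [Complex.div_re, diskPoissonKernel, ← add_div]
  simp only [Complex.add_re, Complex.add_im, Complex.sub_re, Complex.sub_im,
    Complex.ofReal_re, Complex.ofReal_im, Complex.exp_ofReal_mul_I_re,
    Complex.exp_ofReal_mul_I_im, Complex.normSq_apply]
  congr 1 <;> linear_combination sin_sq_add_cos_sq t

-- The primitive is `2 arg (exp (t i) - r) - t`, written with `arctan`: since `1 - r cos t > 0`
-- this branch of the argument is smooth on all of `ℝ`.
lemma hasDerivAt_diskPoissonKernel_primitive (hr : |r| < 1) (t : ℝ) :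
    HasDerivAt (fun t => t + 2 * arctan (r * sin t / (1 - r * cos t)))
      (diskPoissonKernel r t) t := by
  have hc := one_sub_mul_cos_pos hr t
  have hq : HasDerivAt (fun t => r * sin t / (1 - r * cos t))
      ((r * cos t * (1 - r * cos t) - r * sin t * (r * sin t)) / (1 - r * cos t) ^ 2) t := by
    refine ((hasDerivAt_sin t).const_mul r).div ?_ hc.ne'
    simpa using ((hasDerivAt_cos t).const_mul r).const_sub 1
  refine ((hasDerivAt_id' t).add (hq.arctan.const_mul 2)).congr_deriv ?_
  have hd := one_sub_two_mul_cos_add_sq_pos hr t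
  rw [diskPoissonKernel]
  field_simp
  linear_combination (2 * r ^ 3 * cos t - 2 * r ^ 2) * sin_sq_add_cos_sq t

lemma integral_diskPoissonKernel (hr : |r| < 1) (a b : ℝ) :
    ∫ t in a..b, diskPoissonKernel r t =
      (b + 2 * arctan (r * sin b / (1 - r * cos b))) -
        (a + 2 * arctan (r * sin a / (1 - r * cos a))) :=
  intervalIntegral.integral_eq_sub_of_hasDerivAt
    (fun t _ => hasDerivAt_diskPoissonKernel_primitive hr t)
    ((continuous_diskPoissonKernel hr).intervalIntegrable a b)

lemma setIntegral_diskPoissonKernel_Ioc_zero_pi (hr : |r| < 1) :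
    ∫ t in Ioc 0 π, diskPoissonKernel r t = π := by
  rw [← intervalIntegral.integral_of_le pi_pos.le, integral_diskPoissonKernel hr]
  simp

lemma setIntegral_diskPoissonKernel_Ioo_pi_two_pi (hr : |r| < 1) :
    ∫ t in Ioo π (2 * π), diskPoissonKernel r t = π := by
  rw [← integral_Ioc_eq_integral_Ioo, ← intervalIntegral.integral_of_le (by linarith [pi_pos]),
    integral_diskPoissonKernel hr]
  simp
  ring

lemma diskPoissonKernel_le_of_cos_le {c t : ℝ} (hr₀ : 0 ≤ r) (hr₁ : r < 1) (hc : c < 1)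
    (ht : cos t ≤ c) :
    diskPoissonKernel r t ≤ (1 - r ^ 2) / (1 - 2 * r * c + r ^ 2) :=
  div_le_div_of_nonneg_left (by nlinarith) (by nlinarith) (by nlinarith)

lemma tendstoUniformlyOn_diskPoissonKernel {c : ℝ} (hc : c < 1) :
    TendstoUniformlyOn diskPoissonKernel 0 (𝓝[<] 1) {t | cos t ≤ c} := by
  have hbound : Tendsto (fun r : ℝ => (1 - r ^ 2) / (1 - 2 * r * c + r ^ 2)) (𝓝[<] 1) (𝓝 0) := by
    have : ContinuousAt (fun r : ℝ => (1 - r ^ 2) / (1 - 2 * r * c + r ^ 2)) 1 := by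
      fun_prop (disch := nlinarith)
    simpa using this.tendsto.mono_left nhdsWithin_le_nhds
  rw [Metric.tendstoUniformlyOn_iff]
  intro ε hε
  filter_upwards [hbound.eventually_lt_const hε, Ioo_mem_nhdsLT zero_lt_one,
    eventually_abs_lt_one_nhdsLT_one] with r hrε hr hr' t ht
  rw [Pi.zero_apply, dist_zero_left, Real.norm_of_nonneg (diskPoissonKernel_nonneg hr' t)]
  exact (diskPoissonKernel_le_of_cos_le hr.1.le hr.2 hc ht).trans_lt hrε

end Kernel

lemma tendsto_setIntegral_diskPoissonKernel_mul {g : ℝ → ℝ} {s : Set ℝ} {x₀ a m : ℝ}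
    (hs : MeasurableSet s) (hsv : volume s ≠ ∞) (hm : 0 < m)
    (hmass : ∀ r, |r| < 1 → ∫ t in s, diskPoissonKernel r t = m)
    (haway : ∀ ε > 0, ∃ c < 1, ∀ t ∈ s, ε ≤ |t - x₀| → cos t ≤ c)
    (hg : IntegrableOn g s) (hlim : Tendsto g (𝓝[s] x₀) (𝓝 a)) :
    Tendsto (fun r => ∫ t in s, diskPoissonKernel r t * g t) (𝓝[<] 1) (𝓝 (m * a)) := by
  have hr := eventually_abs_lt_one_nhdsLT_one
  have hpeak : Tendsto (fun r => ∫ t in s, (diskPoissonKernel r t / m) • g t) (𝓝[<] 1) (𝓝 a) := by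
    refine tendsto_setIntegral_peak_smul_of_integrableOn_of_tendsto hs hs subset_rfl
      self_mem_nhdsWithin hsv ?_ ?_ ?_ ?_ hg hlim
    · filter_upwards [hr] with r hr t _
      exact div_nonneg (diskPoissonKernel_nonneg hr t) hm.le
    · intro U hU hx₀
      obtain ⟨ε, hε, hball⟩ := Metric.isOpen_iff.1 hU x₀ hx₀
      obtain ⟨c, hc, hcos⟩ := haway ε hε
      have hsub : s \ U ⊆ {t | cos t ≤ c} := fun t ht =>
        hcos t ht.1 (not_lt.1 fun h => ht.2 (hball (by rwa [Metric.mem_ball, Real.dist_eq])))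
      simpa [Function.comp_def, Pi.zero_def] using
        (uniformContinuous_id.div_const' m).comp_tendstoUniformlyOn
          ((tendstoUniformlyOn_diskPoissonKernel hc).mono hsub)
    · refine tendsto_const_nhds.congr' ?_
      filter_upwards [hr] with r hr
      rw [integral_div, hmass r hr, div_self hm.ne']
    · filter_upwards [hr] with r hr
      exact ((continuous_diskPoissonKernel hr).div_const m).aestronglyMeasurable
  refine (hpeak.const_mul m).congr' (Eventually.of_forall fun r => ?_)
  simp only [smul_eq_mul, ← integral_const_mul]
  congr with t
  field_simp

lemma cos_le_cos_of_le_of_le_two_pi_sub {δ t : ℝ} (hδ : 0 ≤ δ) (h₁ : δ ≤ t)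
    (h₂ : t ≤ 2 * π - δ) : cos t ≤ cos δ := by
  rcases le_total t π with ht | ht
  · exact cos_le_cos_of_nonneg_of_le_pi hδ ht h₁
  · rw [← cos_two_pi_sub t]
    exact cos_le_cos_of_nonneg_of_le_pi hδ (by linarith) (by linarith)

lemma cos_min_pi_lt_one {ε : ℝ} (hε : 0 < ε) : cos (min ε π) < 1 := by
  simpa using cos_lt_cos_of_nonneg_of_le_pi le_rfl (min_le_right ε π) (lt_min hε pi_pos)

lemma tendsto_setIntegral_diskPoissonKernel_mul_Ioc_zero_pi {g : ℝ → ℝ} {a : ℝ}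
    (hg : IntegrableOn g (Ioc 0 π)) (hlim : Tendsto g (𝓝[>] 0) (𝓝 a)) :
    Tendsto (fun r => ∫ t in Ioc 0 π, diskPoissonKernel r t * g t) (𝓝[<] 1) (𝓝 (π * a)) := by
  refine tendsto_setIntegral_diskPoissonKernel_mul measurableSet_Ioc measure_Ioc_lt_top.ne
    pi_pos (fun r hr => setIntegral_diskPoissonKernel_Ioc_zero_pi hr) (fun ε hε => ?_) hg
    (hlim.mono_left (nhdsWithin_mono _ Ioc_subset_Ioi_self))
  refine ⟨_, cos_min_pi_lt_one hε, fun t ht hεt => ?_⟩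
  rw [sub_zero, abs_of_pos ht.1] at hεt
  exact cos_le_cos_of_le_of_le_two_pi_sub (le_min hε.le pi_pos.le)
    (by linarith [min_le_left ε π]) (by linarith [ht.2, min_le_right ε π])

lemma tendsto_setIntegral_diskPoissonKernel_mul_Ioo_pi_two_pi {g : ℝ → ℝ} {a : ℝ}
    (hg : IntegrableOn g (Ioo π (2 * π))) (hlim : Tendsto g (𝓝[<] (2 * π)) (𝓝 a)) :
    Tendsto (fun r => ∫ t in Ioo π (2 * π), diskPoissonKernel r t * g t) (𝓝[<] 1)
      (𝓝 (π * a)) := by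
  refine tendsto_setIntegral_diskPoissonKernel_mul measurableSet_Ioo measure_Ioo_lt_top.ne
    pi_pos (fun r hr => setIntegral_diskPoissonKernel_Ioo_pi_two_pi hr) (fun ε hε => ?_) hg
    (hlim.mono_left (nhdsWithin_mono _ Ioo_subset_Iio_self))
  refine ⟨_, cos_min_pi_lt_one hε, fun t ht hεt => ?_⟩
  rw [abs_of_neg (by linarith [ht.2])] at hεt
  exact cos_le_cos_of_le_of_le_two_pi_sub (le_min hε.le pi_pos.le)
    (by linarith [ht.1, min_le_right ε π]) (by linarith [min_le_left ε π])

lemma integrableOn_Ioo_of_continuousOn_of_tendsto {E : Type*} [NormedAddCommGroup E]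
    {f : ℝ → E} {a b : ℝ} {la lb : E} (hf : ContinuousOn f (Ioo a b))
    (ha : Tendsto f (𝓝[>] a) (𝓝 la)) (hb : Tendsto f (𝓝[<] b) (𝓝 lb)) :
    IntegrableOn f (Ioo a b) :=
  ((continuousOn_Icc_extendFrom_Ioo hf ha hb).integrableOn_Icc.mono_set
    Ioo_subset_Icc_self).congr_fun (extendFrom_extends hf) measurableSet_Ioo

lemma intervalIntegral_eq_setIntegral_Ioc_add_setIntegral_Ioo {E : Type*}
    [NormedAddCommGroup E] [NormedSpace ℝ E] {f : ℝ → E} {a b c : ℝ} (hab : a ≤ b)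
    (hbc : b < c) (hf : IntegrableOn f (Ioo a c)) :
    ∫ t in a..c, f t = (∫ t in Ioc a b, f t) + ∫ t in Ioo b c, f t := by
  rw [intervalIntegral.integral_of_le (hab.trans hbc.le), integral_Ioc_eq_integral_Ioo,
    ← Ioc_union_Ioo_eq_Ioo hab hbc,
    setIntegral_union (disjoint_left.2 fun _ h₁ h₂ => h₂.1.not_ge h₁.2) measurableSet_Ioo
      (hf.mono_set (Ioc_subset_Ioo_right hbc)) (hf.mono_set (Ioo_subset_Ioo_left hab))]

theorem stmt_11 (u : ℝ → ℝ)
    -- `u` continuous on the circle off the point `1` :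
    (hcont : ContinuousOn u (Set.Ioo 0 (2 * π)))
    (up um : ℝ)
    -- one-sided limits at the point `1` of the circle :
    (hup : Tendsto u (nhdsWithin 0 (Set.Ioi 0)) (nhds up))
    (hum : Tendsto u (nhdsWithin (2 * π) (Set.Iio (2 * π))) (nhds um))
    (humup : um < up) :
    ∃ L ∈ Set.Icc um up,
      Tendsto (fun r : ℝ => (2 * π)⁻¹ *
          ∫ t in (0:ℝ)..(2 * π),
            ((Complex.exp (t * Complex.I) + (r:ℂ)) /
              (Complex.exp (t * Complex.I) - (r:ℂ))).re * u t)
        (nhdsWithin 1 (Set.Iio 1)) (nhds L) := by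
  have hπ := pi_pos
  have hu := integrableOn_Ioo_of_continuousOn_of_tendsto hcont hup hum
  have hleft := tendsto_setIntegral_diskPoissonKernel_mul_Ioc_zero_pi
    (hu.mono_set (Ioc_subset_Ioo_right (by linarith))) hup
  have hright := tendsto_setIntegral_diskPoissonKernel_mul_Ioo_pi_two_pi
    (hu.mono_set (Ioo_subset_Ioo_left hπ.le)) hum
  refine ⟨(um + up) / 2, ⟨by linarith, by linarith⟩, ?_⟩
  have hL : (2 * π)⁻¹ * (π * up + π * um) = (um + up) / 2 := by field_simp; ring
  rw [← hL]
  refine ((hleft.add hright).const_mul _).congr' ?_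
  filter_upwards [eventually_abs_lt_one_nhdsLT_one] with r hr
  have hPu : IntegrableOn (fun t => diskPoissonKernel r t * u t) (Ioo 0 (2 * π)) :=
    ((by rwa [integrableOn_Icc_iff_integrableOn_Ioo] : IntegrableOn u (Icc 0 (2 * π)))
      |>.continuousOn_mul (continuous_diskPoissonKernel hr).continuousOn isCompact_Icc)
      |>.mono_set Ioo_subset_Icc_self
  simp only [re_exp_add_div_exp_sub]
  rw [intervalIntegral_eq_setIntegral_Ioc_add_setIntegral_Ioo hπ.le (by linarith) hPu]
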